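/- Let p ≥ 1 be an integer and let G be a finite simple graph on vertices v_1, …, v_n whose girth is at least max(8p−3, 4p+2). Let G' be the graph obtained from G as follows: for each i, add a new pendant vertex v_{i,1} adjacent to v_i; and for every pair {i,j} such that the distance between v_i and v_j in G is greater than 2p−1 (including the case where they lie in different components), add 2p−1 new vertices forming a path v_{i,1}, v_{i,2,j}, …, v_{i,p+1,j}, v_{j,p,i}, …, v_{j,2,i}, v_{j,1} of length 2p between v_{i,1} and v_{j,1} (so that v_i v_{i,1} v_{i,2,j} ⋯ v_{i,p+1,j} v_{j,p,i} ⋯ v_{j,2,i} v_{j,1} v_j is a path of length 2p+2), with no other edges. Then: (i) every two vertices of G' are joined by a path of length at most 4p (G' is connected with diameter at most 4p); (ii) the girth of G' is at least 4p+2; and (iii) G' is 3-colourable if and only if G is 3-colourable. -/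

import Mathlib

/-- Pairs `(i,j)` with `i < j` such that the distance between `v_i` and `v_j` in
`G` is greater than `2p-1` (every walk from `v_i` to `v_j` has length `> 2p-1`;
in particular this includes the case where they lie in different components). -/
def farPairs (p n : ℕ) (G : SimpleGraph (Fin n)) : Type :=
  {q : Fin n × Fin n // q.1 < q.2 ∧ ∀ w : G.Walk q.1 q.2, 2 * p - 1 < w.length}

/-- The vertices of `G'`: the original vertices `v_i` (`Sum.inl i`), the pendant
vertices `v_{i,1}` (`Sum.inr (Sum.inl i)`), and for each far pair the `2p-1` new
internal path vertices, indexed by their position `0, …, 2p-2` along the path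
from `v_{i,1}` to `v_{j,1}`. -/
def pathVtx (p n : ℕ) (G : SimpleGraph (Fin n)) : Type :=
  Fin n ⊕ (Fin n ⊕ (farPairs p n G × Fin (2 * p - 1)))

/-- The base relation for `G'`: original edges of `G`; each pendant `v_{i,1}`
adjacent to `v_i`; for each far pair `{i,j}`, `v_{i,1}` adjacent to the first
internal path vertex, `v_{j,1}` adjacent to the last one, and consecutive
internal path vertices adjacent; no other edges. -/
def pathRel (p n : ℕ) (G : SimpleGraph (Fin n)) :
    pathVtx p n G → pathVtx p n G → Prop
  | Sum.inl i, Sum.inl j => G.Adj i j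
  | Sum.inl i, Sum.inr (Sum.inl j) => i = j
  | Sum.inr (Sum.inl i), Sum.inr (Sum.inr (q, t)) =>
      (i = q.val.1 ∧ t.val = 0) ∨ (i = q.val.2 ∧ t.val = 2 * p - 2)
  | Sum.inr (Sum.inr (q, t)), Sum.inr (Sum.inr (q', t')) =>
      q = q' ∧ t'.val = t.val + 1
  | _, _ => False

/-- The graph `G'` obtained from `G` by the construction. -/
def Gprime (p n : ℕ) (G : SimpleGraph (Fin n)) : SimpleGraph (pathVtx p n G) :=
  SimpleGraph.fromRel (pathRel p n G)

/-!
(i) Every vertex of `G'` is within `p` of a pendant vertex `v_{i,1}`, and two pendant vertices are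
within `2p + 1` of each other, within `2p` when their original vertices are far apart in `G` (use
the added path). The only pairs left are two midpoints of added paths all four of whose pairs of
ends are close in `G`; the four short walks then span a forest (they have fewer than `8p - 3`
edges), and the four-point condition of trees contradicts both added paths joining far pairs.

(ii) A cycle avoiding the added paths lies in `G`. A cycle through the added path of `(a, b)`
contains its edge `v_{a,1} v_{a,2,b}`; a lower bound for the distance from `v_{a,1}` once this
edge is deleted is `1`-Lipschitz along every other edge and is `4p + 1` at `v_{a,2,b}`, so the
cycle has length at least `4p + 2`.

(iii) A `3`-colouring of `G` extends along each added path.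
-/

open SimpleGraph

lemma ENat.toNat_min_le_add_one {x y : ℕ∞} (k : ℕ) (h : x ≤ y + 1) :
    (min x k).toNat ≤ (min y k).toNat + 1 := by
  have hle : min x k ≤ min y k + 1 :=
    (min_le_min h le_self_add).trans_eq (min_add_add_right y k 1)
  rw [← ENat.natCast_toNat (ne_top_of_le_ne_top (ENat.natCast_ne_top k) (min_le_right x k)),
    ← ENat.natCast_toNat (ne_top_of_le_ne_top (ENat.natCast_ne_top k) (min_le_right y k))] at hle
  exact_mod_cast hle

namespace SimpleGraph

variable {V : Type*} {Γ : SimpleGraph V} {i j k l u v w x : V}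

lemma edist_le_of_le_add {a b c : ℕ} (h₁ : Γ.edist u v ≤ a) (h₂ : Γ.edist v w ≤ b)
    (h : a + b ≤ c) : Γ.edist u w ≤ c :=
  Γ.edist_triangle.trans <| (add_le_add h₁ h₂).trans <| by exact_mod_cast h

lemma Adj.edist_le_one (h : Γ.Adj u v) : Γ.edist u v ≤ (1 : ℕ) := by
  simp [edist_eq_one_iff_adj.mpr h]

lemma le_edist_of_forall_le_length {k : ℕ} (h : ∀ p : Γ.Walk u v, k ≤ p.length) :
    (k : ℕ∞) ≤ Γ.edist u v := by
  by_cases hr : Γ.Reachable u v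
  · obtain ⟨p, hp⟩ := hr.exists_walk_length_eq_edist
    exact hp ▸ by exact_mod_cast h p
  · simp [edist_eq_top_of_not_reachable hr]

lemma exists_walk_length_le_of_edist_le {k : ℕ} (h : Γ.edist u v ≤ k) :
    ∃ p : Γ.Walk u v, p.length ≤ k := by
  obtain ⟨p, hp⟩ :=
    (reachable_of_edist_ne_top (ne_top_of_le_ne_top (by simp) h)).exists_walk_length_eq_edist
  exact ⟨p, by exact_mod_cast hp ▸ h⟩

lemma Walk.IsCycle.exists_ne_of_mem_support {c : Γ.Walk x x} (hc : c.IsCycle)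
    (hv : v ∈ c.support) : ∃ y z, y ≠ z ∧ s(v, y) ∈ c.edges ∧ s(v, z) ∈ c.edges := by
  obtain ⟨y, z, hyz, h⟩ := Set.ncard_eq_two.mp (hc.ncard_neighborSet_toSubgraph_eq_two hv)
  have hy : y ∈ c.toSubgraph.neighborSet v := h ▸ Set.mem_insert _ _
  have hz : z ∈ c.toSubgraph.neighborSet v := h ▸ Set.mem_insert_of_mem _ rfl
  exact ⟨y, z, hyz, Walk.adj_toSubgraph_iff_mem_edges.mp hy,
    Walk.adj_toSubgraph_iff_mem_edges.mp hz⟩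

lemma Embedding.exists_isCycle_length_eq {V' : Type*} {Γ' : SimpleGraph V'} (f : Γ ↪g Γ')
    {x : V'} {c : Γ'.Walk x x} (hc : c.IsCycle) (hs : ∀ z ∈ c.support, z ∈ Set.range f) :
    ∃ a, ∃ c' : Γ.Walk a a, c'.IsCycle ∧ c'.length = c.length := by
  have hmap := c.map_induce hs
  have hc' : (c.induce _ hs).IsCycle := Walk.IsCycle.of_map (hmap ▸ hc)
  refine ⟨_, _, hc'.map (f := f.isoInduceRange.symm.toEmbedding.toHom)
    f.isoInduceRange.symm.injective, ?_⟩
  have hlen := congrArg Walk.length hmap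
  rw [Walk.length_map] at hlen ⊢
  exact hlen

lemma Walk.IsPath.append_of_support {p : Γ.Walk u v} {q : Γ.Walk v w} (hp : p.IsPath)
    (hq : q.IsPath) (h : ∀ z ∈ p.support, z ∈ q.support → z = v) : (p.append q).IsPath := by
  rw [isPath_def, support_append]
  have hq' := (isPath_def _).mp hq
  rw [← q.cons_tail_support, List.nodup_cons] at hq'
  refine ((isPath_def _).mp hp).append hq'.2 fun z hzp hzq => ?_
  obtain rfl := h z hzp (List.mem_of_mem_tail hzq)
  exact hq'.1 hzq

lemma Walk.le_add_length_of_lipschitz {f : V → ℕ} {e : Sym2 V}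
    (hf : ∀ x y, Γ.Adj x y → s(x, y) ≠ e → f x ≤ f y + 1)
    (p : Γ.Walk u v) (he : e ∉ p.edges) : f u ≤ f v + p.length := by
  induction p with
  | nil => simp
  | cons h p ih =>
    rw [edges_cons, List.mem_cons, not_or] at he
    have := hf _ _ h (Ne.symm he.1)
    have := ih he.2
    rw [length_cons]
    omega

lemma Walk.IsTrail.add_one_le_length_of_lipschitz {c : Γ.Walk x x} (hc : c.IsTrail)
    (he : s(u, v) ∈ c.edges) {f : V → ℕ}
    (hf : ∀ x y, Γ.Adj x y → s(x, y) ≠ s(u, v) → f x ≤ f y + 1) :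
    f u + 1 ≤ f v + c.length := by
  classical
  have hu := c.fst_mem_support_of_mem_edges he
  have hv := (c.rotate u hu).snd_mem_support_of_mem_edges
    ((c.rotate_edges u hu).mem_iff.mpr he)
  have huv : u ≠ v := (c.adj_of_mem_edges he).ne
  set p := (c.rotate u hu).takeUntil v hv
  set q := (c.rotate u hu).dropUntil v hv
  have hspec : p.append q = c.rotate u hu := (c.rotate u hu).take_spec hv
  have hnodup : (p.edges ++ q.edges).Nodup := by
    rw [← edges_append, hspec]; exact (hc.rotate hu).edges_nodup
  have hlen : p.length + q.length = c.length := by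
    rw [← length_append, hspec, length_rotate]
  have hp : 0 < p.length := Nat.pos_of_ne_zero fun h => huv (eq_of_length_eq_zero h)
  have hq : 0 < q.length := Nat.pos_of_ne_zero fun h => huv (eq_of_length_eq_zero h).symm
  by_cases hep : s(u, v) ∈ p.edges
  · have heq : s(u, v) ∉ q.reverse.edges := by
      rw [edges_reverse, List.mem_reverse]
      exact List.disjoint_of_nodup_append hnodup hep
    have := le_add_length_of_lipschitz hf q.reverse heq
    rw [length_reverse] at this
    omega
  · have := le_add_length_of_lipschitz hf p hep
    omega

lemma IsAcyclic.length_eq_dist (hΓ : Γ.IsAcyclic) {p : Γ.Walk u v} (hp : p.IsPath) :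
    p.length = Γ.dist u v := by
  obtain ⟨q, hq, hlen⟩ := p.reachable.exists_path_of_dist
  obtain rfl : p = q :=
    congrArg Subtype.val ((hΓ.subsingleton_path u v).elim ⟨p, hp⟩ ⟨q, hq⟩)
  exact hlen

lemma IsAcyclic.dist_add_dist_eq (hΓ : Γ.IsAcyclic) {p : Γ.Walk u v} (hp : p.IsPath)
    (hw : w ∈ p.support) : Γ.dist u w + Γ.dist w v = Γ.dist u v := by
  classical
  rw [← hΓ.length_eq_dist (hp.takeUntil hw), ← hΓ.length_eq_dist (hp.dropUntil hw),
    ← hΓ.length_eq_dist hp, ← Walk.length_append, p.take_spec hw]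

/-- The vertex `m` of `p` closest to `w` is the median of `u, v, w`. -/
lemma IsAcyclic.exists_median (hΓ : Γ.IsAcyclic) {p : Γ.Walk u v} (hp : p.IsPath)
    (hw : Γ.Reachable w u) : ∃ m ∈ p.support,
      Γ.dist w u = Γ.dist w m + Γ.dist m u ∧ Γ.dist w v = Γ.dist w m + Γ.dist m v := by
  classical
  obtain ⟨m, hm, hmin⟩ :=
    p.support.toFinset.exists_min_image (Γ.dist w) ⟨u, by simp⟩
  rw [List.mem_toFinset] at hm
  obtain ⟨r, hr, hrlen⟩ :=
    (hw.trans (p.takeUntil m hm).reachable).exists_path_of_dist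
  have hdisj : ∀ z ∈ r.support, z ∈ p.support → z = m := by
    intro z hzr hzp
    by_contra hne
    have := r.length_takeUntil_lt_length hzr hne
    have := dist_le (r.takeUntil z hzr)
    have := hmin z (List.mem_toFinset.mpr hzp)
    omega
  refine ⟨m, hm, ?_, ?_⟩
  · have h := hr.append_of_support (hp.takeUntil hm).reverse fun z hzr hzp =>
      hdisj z hzr (p.support_takeUntil_subset_support hm (by simpa using hzp))
    rw [← hΓ.length_eq_dist h, Walk.length_append, Walk.length_reverse, hrlen,
      hΓ.length_eq_dist (hp.takeUntil hm), dist_comm (u := u)]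
  · have h := hr.append_of_support (hp.dropUntil hm) fun z hzr hzp =>
      hdisj z hzr (p.support_dropUntil_subset_support hm hzp)
    rw [← hΓ.length_eq_dist h, Walk.length_append, hrlen,
      hΓ.length_eq_dist (hp.dropUntil hm)]

theorem IsAcyclic.dist_add_dist_le_max (hΓ : Γ.IsAcyclic) (hj : Γ.Reachable i j)
    (hk : Γ.Reachable i k) (hl : Γ.Reachable i l) :
    Γ.dist i j + Γ.dist k l ≤ max (Γ.dist i k + Γ.dist j l) (Γ.dist i l + Γ.dist j k) := by
  classical
  obtain ⟨p, hp, -⟩ := hj.exists_path_of_dist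
  obtain ⟨m, hm, hki, hkj⟩ := hΓ.exists_median hp hk.symm
  obtain ⟨m', hm', hli, hlj⟩ := hΓ.exists_median hp hl.symm
  have := (hk.symm.trans (p.takeUntil m hm).reachable).dist_triangle_left l
  have :=
    ((p.takeUntil m hm).reachable.symm.trans (p.takeUntil m' hm').reachable).dist_triangle_left l
  have := hΓ.dist_add_dist_eq hp hm
  have := hΓ.dist_add_dist_eq hp hm'
  have := Γ.dist_comm (u := k) (v := i)
  have := Γ.dist_comm (u := k) (v := j)
  have := Γ.dist_comm (u := l) (v := i)
  have := Γ.dist_comm (u := l) (v := j)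
  have := Γ.dist_comm (u := l) (v := m')
  have := Γ.dist_comm (u := m) (v := i)
  have := Γ.dist_comm (u := m') (v := i)
  rw [← p.take_spec hm, Walk.mem_support_append_iff] at hm'
  rcases hm' with hm' | hm'
  · have := hΓ.dist_add_dist_eq (hp.takeUntil hm) hm'
    have := Γ.dist_comm (u := m) (v := m')
    omega
  · have := hΓ.dist_add_dist_eq (hp.dropUntil hm) hm'
    omega

theorem exists_walks_length_add_le_max (A : Γ.Walk i k) (B : Γ.Walk i l) (C : Γ.Walk j k)
    (D : Γ.Walk j l)
    (hcyc : ∀ a (c : Γ.Walk a a), c.IsCycle →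
      A.length + B.length + C.length + D.length < c.length) :
    ∃ (p : Γ.Walk i j) (q : Γ.Walk k l),
      p.length + q.length ≤ max (A.length + D.length) (B.length + C.length) := by
  classical
  set L := A.edges ++ B.edges ++ C.edges ++ D.edges
  set H := fromEdgeSet {e | e ∈ L}
  have hLΓ : ∀ e ∈ L, e ∈ Γ.edgeSet := by
    simp only [L, List.mem_append]
    rintro e (((he | he) | he) | he) <;> exact Walk.edges_subset_edgeSet _ he
  have hHΓ : H ≤ Γ := fun x y h => hLΓ _ ((fromEdgeSet_adj _).mp h).1
  have hH : H.IsAcyclic := by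
    intro a c hc
    have hlt := hcyc a _ (hc.mapLe hHΓ)
    have hsub : c.edges ⊆ L := fun e he => (edgeSet_fromEdgeSet _ ▸ c.edges_subset_edgeSet he).1
    have := (hc.edges_nodup.subperm hsub).length_le
    simp only [Walk.length_map, Walk.length_edges, L, List.length_append] at hlt this
    omega
  have hLH : ∀ e ∈ L, e ∈ H.edgeSet := fun e he =>
    edgeSet_fromEdgeSet _ ▸ ⟨he, Γ.not_isDiag_of_mem_edgeSet (hLΓ e he)⟩
  set A' := A.transfer H fun e he => hLH e (by simp [L, he])
  set B' := B.transfer H fun e he => hLH e (by simp [L, he])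
  set C' := C.transfer H fun e he => hLH e (by simp [L, he])
  set D' := D.transfer H fun e he => hLH e (by simp [L, he])
  have hfour := hH.dist_add_dist_le_max (A'.append C'.reverse).reachable A'.reachable B'.reachable
  have := H.dist_le A'
  have := H.dist_le B'
  have := H.dist_le C'
  have := H.dist_le D'
  obtain ⟨p, hp⟩ := (A'.append C'.reverse).reachable.exists_walk_length_eq_dist
  obtain ⟨q, hq⟩ := (C'.reverse.append D').reachable.exists_walk_length_eq_dist
  refine ⟨p.mapLe hHΓ, q.mapLe hHΓ, ?_⟩
  simp only [Walk.length_map, hp, hq, A', B', C', D', Walk.length_transfer] at *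
  omega

end SimpleGraph

namespace Gprime

variable {p n : ℕ} {G : SimpleGraph (Fin n)}

/- `orig i` is `v_i`, `pend i` is `v_{i,1}`, and `inner q t` is the vertex at distance `t + 1`
from `v_{i,1}` on the path added for `q = (i, j)`. -/

abbrev orig (i : Fin n) : pathVtx p n G := Sum.inl i

abbrev pend (i : Fin n) : pathVtx p n G := Sum.inr (Sum.inl i)

abbrev inner (q : farPairs p n G) (t : Fin (2 * p - 1)) : pathVtx p n G :=
  Sum.inr (Sum.inr (q, t))

lemma adj_iff {x y : pathVtx p n G} :
    (Gprime p n G).Adj x y ↔ x ≠ y ∧ (pathRel p n G x y ∨ pathRel p n G y x) :=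
  Iff.rfl

variable {i j : Fin n} {q r : farPairs p n G} {t s : Fin (2 * p - 1)}

@[simp] lemma adj_orig_orig : (Gprime p n G).Adj (orig i) (orig j) ↔ G.Adj i j := by
  rw [adj_iff]
  simp only [pathRel, G.adj_comm j i, or_self]
  exact ⟨And.right, fun h => ⟨fun e => h.ne (Sum.inl_injective e), h⟩⟩

@[simp] lemma adj_orig_pend : (Gprime p n G).Adj (orig i) (pend j) ↔ i = j := by
  rw [adj_iff]
  simp only [pathRel, or_false]
  exact ⟨And.right, fun h => ⟨Sum.inl_ne_inr, h⟩⟩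

@[simp] lemma adj_pend_orig : (Gprime p n G).Adj (pend i) (orig j) ↔ i = j :=
  (Gprime p n G).adj_comm _ _ |>.trans adj_orig_pend |>.trans eq_comm

@[simp] lemma not_adj_orig_inner : ¬ (Gprime p n G).Adj (orig i) (inner q t) := by
  simp [adj_iff, pathRel]

@[simp] lemma not_adj_inner_orig : ¬ (Gprime p n G).Adj (inner q t) (orig i) := by
  simp [adj_iff, pathRel]

@[simp] lemma not_adj_pend_pend : ¬ (Gprime p n G).Adj (pend i) (pend j) := by
  simp [adj_iff, pathRel]

@[simp] lemma adj_pend_inner : (Gprime p n G).Adj (pend i) (inner q t) ↔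
    i = q.val.1 ∧ t.val = 0 ∨ i = q.val.2 ∧ t.val = 2 * p - 2 := by
  rw [adj_iff]
  simp only [pathRel, or_false]
  exact ⟨And.right, fun h => ⟨fun e => Sum.inl_ne_inr (Sum.inr_injective e), h⟩⟩

@[simp] lemma adj_inner_pend : (Gprime p n G).Adj (inner q t) (pend i) ↔
    i = q.val.1 ∧ t.val = 0 ∨ i = q.val.2 ∧ t.val = 2 * p - 2 :=
  (Gprime p n G).adj_comm _ _ |>.trans adj_pend_inner

@[simp] lemma adj_inner_inner : (Gprime p n G).Adj (inner q t) (inner r s) ↔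
    q = r ∧ (s.val = t.val + 1 ∨ t.val = s.val + 1) := by
  rw [adj_iff]
  simp only [pathRel]
  constructor
  · rintro ⟨-, ⟨rfl, h⟩ | ⟨rfl, h⟩⟩ <;> simp [h]
  · rintro ⟨rfl, h⟩
    refine ⟨fun e => ?_, h.imp (⟨rfl, ·⟩) (⟨rfl, ·⟩)⟩
    cases e
    omega

def origEmbedding : G ↪g Gprime p n G where
  toFun := orig
  inj' := Sum.inl_injective
  map_rel_iff' := adj_orig_orig

def third (x y : Fin 3) : Fin 3 := if x + 1 = y then x + 2 else x + 1

lemma third_ne_left : ∀ x y : Fin 3, third x y ≠ x := by decide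

lemma third_ne_right : ∀ x y : Fin 3, third x y ≠ y := by decide

/-- Inner vertices alternate between the colours `C v_i + 2` and `C v_i + 1` along the path
starting at `v_{i,1}`; the last one takes the colour missing from both of its neighbours. -/
def extendColor (C : G.Coloring (Fin 3)) : pathVtx p n G → Fin 3
  | Sum.inl i => C i
  | Sum.inr (Sum.inl i) => C i + 1
  | Sum.inr (Sum.inr (q, t)) =>
      if t.val = 2 * p - 2 then third (C q.val.1 + 1) (C q.val.2 + 1)
      else if Even t.val then C q.val.1 + 2 else C q.val.1 + 1

lemma extendColor_ne_of_pathRel (C : G.Coloring (Fin 3)) {x y : pathVtx p n G}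
    (h : pathRel p n G x y) : extendColor C x ≠ extendColor C y := by
  have add_one_ne_self : ∀ x : Fin 3, x + 1 ≠ x := by decide
  have add_two_ne_add_one : ∀ x : Fin 3, x + 2 ≠ x + 1 := by decide
  rcases x with i | i | ⟨q, t⟩ <;> rcases y with j | j | ⟨r, s⟩ <;> simp only [pathRel] at h
  · exact C.valid h
  · subst h; exact (add_one_ne_self _).symm
  · simp only [extendColor]
    rcases h with ⟨rfl, ht⟩ | ⟨rfl, ht⟩
    · split_ifs with hs
      · exact (third_ne_left _ _).symm
      · exact (add_two_ne_add_one _).symm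
      · exact absurd ⟨0, by omega⟩ ‹¬Even s.val›
    · rw [if_pos ht]
      exact (third_ne_right _ _).symm
  · obtain ⟨rfl, hs⟩ := h
    simp only [extendColor]
    have hlt := s.isLt
    rw [if_neg (show t.val ≠ 2 * p - 2 by omega)]
    by_cases hlast : s.val = 2 * p - 2
    · have : ¬Even t.val := Nat.not_even_iff_odd.mpr ⟨p - 2, by omega⟩
      rw [if_pos hlast, if_neg this]
      exact (third_ne_left _ _).symm
    · rw [if_neg hlast, hs]
      rcases Nat.even_or_odd t.val with he | ho
      · rw [if_pos he, if_neg (Nat.not_even_iff_odd.mpr he.add_one)]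
        exact add_two_ne_add_one _
      · rw [if_neg (Nat.not_even_iff_odd.mpr ho), if_pos ho.add_one]
        exact (add_two_ne_add_one _).symm

def extendColoring (C : G.Coloring (Fin 3)) : (Gprime p n G).Coloring (Fin 3) :=
  Coloring.mk (extendColor C) fun h => (adj_iff.mp h).2.elim
    (extendColor_ne_of_pathRel C) fun h' => (extendColor_ne_of_pathRel C h').symm

theorem colorable_three_iff : (Gprime p n G).Colorable 3 ↔ G.Colorable 3 :=
  ⟨fun h => h.of_hom origEmbedding.toHom, fun ⟨C⟩ => ⟨extendColoring C⟩⟩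

lemma edist_inner_pend_fst (q : farPairs p n G) (t : Fin (2 * p - 1)) :
    (Gprime p n G).edist (inner q t) (pend q.val.1) ≤ (t.val + 1 : ℕ) := by
  obtain ⟨t, ht⟩ := t
  induction t with
  | zero => exact (adj_inner_pend.mpr (.inl ⟨rfl, rfl⟩)).edist_le_one
  | succ t ih =>
    exact edist_le_of_le_add (adj_inner_inner.mpr ⟨rfl, .inr rfl⟩).edist_le_one
      (ih (by omega)) (by dsimp only; omega)

lemma edist_inner_pend_snd (q : farPairs p n G) (t : Fin (2 * p - 1)) :
    (Gprime p n G).edist (inner q t) (pend q.val.2) ≤ (2 * p - 1 - t.val : ℕ) := by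
  obtain ⟨t, ht⟩ := t
  induction hk : 2 * p - 2 - t generalizing t with
  | zero =>
    exact (adj_inner_pend.mpr (.inr ⟨rfl, by dsimp only; omega⟩)).edist_le_one.trans
      (Nat.cast_le.mpr (by omega))
  | succ k ih =>
    exact edist_le_of_le_add (adj_inner_inner.mpr ⟨rfl, .inl rfl⟩).edist_le_one
      (ih (t + 1) (by omega) (by omega)) (by dsimp only; omega)

lemma edist_orig_orig_le_length (w : G.Walk i j) :
    (Gprime p n G).edist (orig i) (orig j) ≤ w.length := by
  have := edist_le (w.map (origEmbedding (p := p)).toHom)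
  rwa [Walk.length_map] at this

lemma edist_pend_pend_le_of_far (hp : 1 ≤ p) (hij : i ≠ j)
    (hfar : ∀ w : G.Walk i j, 2 * p - 1 < w.length) :
    (Gprime p n G).edist (pend i) (pend j) ≤ (2 * p : ℕ) := by
  wlog h : i < j generalizing i j
  · rw [edist_comm]
    exact this hij.symm (fun w => by simpa using hfar w.reverse)
      (lt_of_le_of_ne (not_lt.mp h) hij.symm)
  let q : farPairs p n G := ⟨(i, j), h, hfar⟩
  let t₀ : Fin (2 * p - 1) := ⟨0, by omega⟩
  exact edist_le_of_le_add (edist_comm.trans_le (edist_inner_pend_fst q t₀))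
    (edist_inner_pend_snd q t₀) (by simp [t₀]; omega)

lemma edist_pend_pend_le_or (hp : 1 ≤ p) (i j : Fin n) :
    (Gprime p n G).edist (pend i) (pend j) ≤ (2 * p : ℕ) ∨
      ∃ w : G.Walk i j, w.length ≤ 2 * p - 1 := by
  by_cases hij : i = j
  · simp [hij]
  by_cases hfar : ∀ w : G.Walk i j, 2 * p - 1 < w.length
  · exact .inl (edist_pend_pend_le_of_far hp hij hfar)
  · simp only [not_forall, not_lt] at hfar
    exact .inr hfar

lemma edist_pend_pend_le (hp : 1 ≤ p) (i j : Fin n) :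
    (Gprime p n G).edist (pend i) (pend j) ≤ (2 * p + 1 : ℕ) := by
  rcases edist_pend_pend_le_or hp i j with h | ⟨w, hw⟩
  · exact h.trans (Nat.cast_le.mpr (by omega))
  · exact edist_le_of_le_add (edist_le_of_le_add (adj_pend_orig.mpr rfl).edist_le_one
      (edist_orig_orig_le_length w) rfl.le) (adj_orig_pend.mpr rfl).edist_le_one (by omega)

lemma edist_orig_pend_le (hp : 1 ≤ p) (i j : Fin n) :
    (Gprime p n G).edist (orig i) (pend j) ≤ (2 * p + 1 : ℕ) := by
  rcases edist_pend_pend_le_or hp i j with h | ⟨w, hw⟩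
  · exact edist_le_of_le_add (adj_orig_pend.mpr rfl).edist_le_one h (by omega)
  · exact edist_le_of_le_add (edist_orig_orig_le_length w) (adj_orig_pend.mpr rfl).edist_le_one
      (by omega)

lemma edist_orig_orig_le (hp : 1 ≤ p) (i j : Fin n) :
    (Gprime p n G).edist (orig i) (orig j) ≤ (2 * p + 2 : ℕ) := by
  rcases edist_pend_pend_le_or hp i j with h | ⟨w, hw⟩
  · exact edist_le_of_le_add (edist_le_of_le_add (adj_orig_pend.mpr rfl).edist_le_one h rfl.le)
      (adj_pend_orig.mpr rfl).edist_le_one (by omega)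
  · exact (edist_orig_orig_le_length w).trans (Nat.cast_le.mpr (by omega))

lemma edist_inner_le {x : pathVtx p n G} {q : farPairs p n G} {D : ℕ}
    (h₁ : (Gprime p n G).edist x (pend q.val.1) ≤ D)
    (h₂ : (Gprime p n G).edist x (pend q.val.2) ≤ D) (t : Fin (2 * p - 1)) :
    (Gprime p n G).edist x (inner q t) ≤ (D + p : ℕ) := by
  rw [edist_comm (u := x)] at h₁ h₂ ⊢
  rcases le_or_gt (t.val + 1) p with ht | ht
  · exact edist_le_of_le_add (edist_inner_pend_fst q t) h₁ (by omega)
  · exact edist_le_of_le_add (edist_inner_pend_snd q t) h₂ (by omega)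

lemma edist_inner_inner_le_of_midpoint (hp : 1 ≤ p)
    (hG : ∀ a (c : G.Walk a a), c.IsCycle → 8 * p - 3 ≤ c.length)
    {q r : farPairs p n G} {t s : Fin (2 * p - 1)} (ht : t.val + 1 = p) (hs : s.val + 1 = p) :
    (Gprime p n G).edist (inner q t) (inner r s) ≤ (4 * p : ℕ) := by
  by_contra hcon
  have hclose : ∀ a c, (Gprime p n G).edist (inner q t) (pend a) ≤ p →
      (Gprime p n G).edist (pend c) (inner r s) ≤ p →
      ∃ w : G.Walk a c, w.length ≤ 2 * p - 1 := fun a c ha hc =>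
    (edist_pend_pend_le_or hp a c).resolve_left fun h =>
      hcon (edist_le_of_le_add (edist_le_of_le_add ha h rfl.le) hc (by omega))
  have h₁ := (edist_inner_pend_fst q t).trans (Nat.cast_le.mpr ht.le)
  have h₂ := (edist_inner_pend_snd q t).trans
    (Nat.cast_le.mpr (by omega : 2 * p - 1 - t.val ≤ p))
  have h₃ := edist_comm.trans_le <| (edist_inner_pend_fst r s).trans (Nat.cast_le.mpr hs.le)
  have h₄ := edist_comm.trans_le <|
    (edist_inner_pend_snd r s).trans (Nat.cast_le.mpr (by omega : 2 * p - 1 - s.val ≤ p))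
  obtain ⟨A, hA⟩ := hclose _ _ h₁ h₃
  obtain ⟨B, hB⟩ := hclose _ _ h₁ h₄
  obtain ⟨C, hC⟩ := hclose _ _ h₂ h₃
  obtain ⟨D, hD⟩ := hclose _ _ h₂ h₄
  obtain ⟨w₁, w₂, hw⟩ := exists_walks_length_add_le_max A B C D fun a c hc => by
    have := hG a c hc
    omega
  have := q.prop.2 w₁
  have := r.prop.2 w₂
  omega

lemma edist_inner_inner_le (hp : 1 ≤ p)
    (hG : ∀ a (c : G.Walk a a), c.IsCycle → 8 * p - 3 ≤ c.length)
    (q : farPairs p n G) (t : Fin (2 * p - 1)) (r : farPairs p n G) (s : Fin (2 * p - 1)) :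
    (Gprime p n G).edist (inner q t) (inner r s) ≤ (4 * p : ℕ) := by
  have h₁ : ∀ a, (Gprime p n G).edist (pend a) (inner r s) ≤ (2 * p + 1 + p : ℕ) := fun a =>
    edist_inner_le (edist_pend_pend_le hp _ _) (edist_pend_pend_le hp _ _) s
  have h₂ : ∀ a, (Gprime p n G).edist (inner q t) (pend a) ≤ (2 * p + 1 + p : ℕ) := fun a =>
    edist_comm.trans_le (edist_inner_le (edist_pend_pend_le hp _ _) (edist_pend_pend_le hp _ _) t)
  have := t.isLt
  have := s.isLt
  rcases lt_trichotomy (t.val + 1) p with ht | ht | ht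
  · exact edist_le_of_le_add (edist_inner_pend_fst q t) (h₁ _) (by omega)
  · rcases lt_trichotomy (s.val + 1) p with hs | hs | hs
    · exact edist_le_of_le_add (h₂ _) (edist_comm.trans_le (edist_inner_pend_fst r s)) (by omega)
    · exact edist_inner_inner_le_of_midpoint hp hG ht hs
    · exact edist_le_of_le_add (h₂ _) (edist_comm.trans_le (edist_inner_pend_snd r s)) (by omega)
  · exact edist_le_of_le_add (edist_inner_pend_snd q t) (h₁ _) (by omega)

theorem edist_le_four_mul (hp : 1 ≤ p)
    (hG : ∀ a (c : G.Walk a a), c.IsCycle → 8 * p - 3 ≤ c.length) (x y : pathVtx p n G) :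
    (Gprime p n G).edist x y ≤ (4 * p : ℕ) := by
  have hle {k : ℕ} (h : k ≤ 4 * p) : (k : ℕ∞) ≤ (4 * p : ℕ) := Nat.cast_le.mpr h
  rcases x with i | i | ⟨q, t⟩ <;> rcases y with j | j | ⟨r, s⟩
  · exact (edist_orig_orig_le hp i j).trans (hle (by omega))
  · exact (edist_orig_pend_le hp i j).trans (hle (by omega))
  · exact (edist_inner_le (edist_orig_pend_le hp _ _) (edist_orig_pend_le hp _ _) s).trans
      (hle (by omega))
  · exact edist_comm.trans_le ((edist_orig_pend_le hp j i).trans (hle (by omega)))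
  · exact (edist_pend_pend_le hp i j).trans (hle (by omega))
  · exact (edist_inner_le (edist_pend_pend_le hp _ _) (edist_pend_pend_le hp _ _) s).trans
      (hle (by omega))
  · exact edist_comm.trans_le <| (edist_inner_le (edist_orig_pend_le hp _ _)
      (edist_orig_pend_le hp _ _) t).trans (hle (by omega))
  · exact edist_comm.trans_le <| (edist_inner_le (edist_pend_pend_le hp _ _)
      (edist_pend_pend_le hp _ _) t).trans (hle (by omega))
  · exact edist_inner_inner_le hp hG q t r s

/-- The cap keeps this finite, hence meaningful after `toNat`, when `v` is not reachable. -/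
noncomputable def cutDist (q : farPairs p n G) (v : Fin n) : ℕ :=
  (min (G.edist q.val.1 v) (2 * p : ℕ)).toNat

lemma cutDist_le (q : farPairs p n G) (v : Fin n) : cutDist q v ≤ 2 * p :=
  ENat.toNat_le_of_le_natCast (min_le_right _ _)

lemma cutDist_fst (q : farPairs p n G) : cutDist q q.val.1 = 0 := by
  simp [cutDist]

lemma cutDist_snd (q : farPairs p n G) : cutDist q q.val.2 = 2 * p := by
  have := le_edist_of_forall_le_length (k := 2 * p) fun w => by have := q.prop.2 w; omega
  rw [cutDist, min_eq_right this, ENat.toNat_natCast]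

lemma cutDist_le_add_one (q : farPairs p n G) {u v : Fin n} (h : G.Adj u v) :
    cutDist q v ≤ cutDist q u + 1 :=
  ENat.toNat_min_le_add_one _ <|
    G.edist_triangle.trans <| add_le_add le_rfl (edist_eq_one_iff_adj.mpr h).le

noncomputable def pendPotential (q : farPairs p n G) (v : Fin n) : ℕ :=
  if v = q.val.1 then 0 else if v = q.val.2 then 2 * p + 2 else min (cutDist q v + 2) (2 * p)

/-- A lower bound for the distance from `v_{a,1}` in `G'` with the edge `v_{a,1} v_{a,2,b}`
deleted, where `q = (a, b)`. -/
noncomputable def potential (q : farPairs p n G) : pathVtx p n G → ℕ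
  | Sum.inl v => cutDist q v + 1
  | Sum.inr (Sum.inl v) => pendPotential q v
  | Sum.inr (Sum.inr (r, t)) =>
    if r.val = q.val then 4 * p + 1 - t.val
    else min (pendPotential q r.val.1 + (t.val + 1))
      (pendPotential q r.val.2 + (2 * p - 1 - t.val))

lemma cutDist_le_pendPotential (q : farPairs p n G) (v : Fin n) :
    cutDist q v ≤ pendPotential q v := by
  have := cutDist_le q v
  unfold pendPotential
  split_ifs with h₁ h₂
  · simp [h₁, cutDist_fst]
  · omega
  · omega

lemma pendPotential_le_cutDist_add_two (q : farPairs p n G) (v : Fin n) :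
    pendPotential q v ≤ cutDist q v + 2 := by
  unfold pendPotential
  split_ifs with h₁ h₂
  · omega
  · simp [h₂, cutDist_snd]
  · omega

lemma pendPotential_le_add (hp : 1 ≤ p) (q r : farPairs p n G) (hr : r.val ≠ q.val) :
    pendPotential q r.val.1 ≤ pendPotential q r.val.2 + 2 * p ∧
      pendPotential q r.val.2 ≤ pendPotential q r.val.1 + 2 * p := by
  have hq := q.prop.1
  have hr' := r.prop.1
  have hne : ¬ (r.val.1 = q.val.1 ∧ r.val.2 = q.val.2) := fun h => hr (Prod.ext h.1 h.2)
  simp only [pendPotential]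
  split_ifs <;> simp_all [Fin.ext_iff] <;> omega

lemma potential_le_add_one (q : farPairs p n G) (t₀ : Fin (2 * p - 1)) (ht₀ : t₀.val = 0)
    {x y : pathVtx p n G} (h : (Gprime p n G).Adj x y)
    (hcut : s(x, y) ≠ s(inner q t₀, pend q.val.1)) : potential q x ≤ potential q y + 1 := by
  have hp : 1 ≤ p := by have := t₀.isLt; omega
  have hq := q.prop.1
  rcases x with u | u | ⟨r, t⟩ <;> rcases y with v | v | ⟨r', s⟩
  · exact Nat.add_le_add_right (cutDist_le_add_one q (adj_orig_orig.mp h).symm) 1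
  · obtain rfl := adj_orig_pend.mp h
    exact Nat.add_le_add_right (cutDist_le_pendPotential q u) 1
  · exact absurd h not_adj_orig_inner
  · obtain rfl := adj_pend_orig.mp h
    exact pendPotential_le_cutDist_add_two q u
  · exact absurd h not_adj_pend_pend
  · have := s.isLt
    by_cases hrq : r'.val = q.val
    · obtain rfl : r' = q := Subtype.ext hrq
      rcases adj_pend_inner.mp h with ⟨rfl, hs⟩ | ⟨rfl, hs⟩
      · exact absurd (by rw [Fin.ext (hs.trans ht₀.symm), Sym2.eq_swap]) hcut
      · simp [potential, pendPotential, hq.ne']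
        omega
    · have := pendPotential_le_add hp q r' hrq
      simp only [potential, if_neg hrq]
      rcases adj_pend_inner.mp h with ⟨rfl, ht⟩ | ⟨rfl, ht⟩ <;> omega
  · exact absurd h not_adj_inner_orig
  · by_cases hrq : r.val = q.val
    · obtain rfl : r = q := Subtype.ext hrq
      rcases adj_inner_pend.mp h with ⟨rfl, ht⟩ | ⟨rfl, ht⟩
      · exact absurd (by rw [Fin.ext (ht.trans ht₀.symm)]) hcut
      · simp [potential, pendPotential, hq.ne']
        omega
    · simp only [potential, if_neg hrq]
      rcases adj_inner_pend.mp h with ⟨rfl, ht⟩ | ⟨rfl, ht⟩ <;> omega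
  · obtain ⟨rfl, hts⟩ := adj_inner_inner.mp h
    have := t.isLt
    have := s.isLt
    simp only [potential]
    split_ifs <;> omega

lemma adj_inner_left_or_right {q : farPairs p n G} {t : Fin (2 * p - 1)} {y : pathVtx p n G}
    (h : (Gprime p n G).Adj (inner q t) y) :
    (t.val = 0 ∧ y = pend q.val.1 ∨
        ∃ s : Fin (2 * p - 1), s.val + 1 = t.val ∧ y = inner q s) ∨
      (t.val = 2 * p - 2 ∧ y = pend q.val.2 ∨
        ∃ s : Fin (2 * p - 1), s.val = t.val + 1 ∧ y = inner q s) := by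
  rcases y with j | j | ⟨r, s⟩
  · exact absurd h not_adj_inner_orig
  · rcases adj_inner_pend.mp h with ⟨rfl, ht⟩ | ⟨rfl, ht⟩
    exacts [.inl (.inl ⟨ht, rfl⟩), .inr (.inl ⟨ht, rfl⟩)]
  · obtain ⟨rfl, hs | hs⟩ := adj_inner_inner.mp h
    exacts [.inr (.inr ⟨s, hs, rfl⟩), .inl (.inr ⟨s, hs.symm, rfl⟩)]

lemma eq_of_right {q : farPairs p n G} {t : Fin (2 * p - 1)} {y z : pathVtx p n G}
    (hy : t.val = 2 * p - 2 ∧ y = pend q.val.2 ∨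
      ∃ s : Fin (2 * p - 1), s.val = t.val + 1 ∧ y = inner q s)
    (hz : t.val = 2 * p - 2 ∧ z = pend q.val.2 ∨
      ∃ s : Fin (2 * p - 1), s.val = t.val + 1 ∧ z = inner q s) : y = z := by
  rcases hy with ⟨ht, rfl⟩ | ⟨s, hs, rfl⟩ <;>
    rcases hz with ⟨ht', rfl⟩ | ⟨s', hs', rfl⟩
  · rfl
  · have := s'.isLt; omega
  · have := s.isLt; omega
  · rw [Fin.ext (hs.trans hs'.symm)]

lemma exists_left_mem_edges {x : pathVtx p n G} {c : (Gprime p n G).Walk x x} (hc : c.IsCycle)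
    {q : farPairs p n G} {t : Fin (2 * p - 1)} (hmem : inner q t ∈ c.support) :
    ∃ y, s(inner q t, y) ∈ c.edges ∧
      (t.val = 0 ∧ y = pend q.val.1 ∨
        ∃ s : Fin (2 * p - 1), s.val + 1 = t.val ∧ y = inner q s) := by
  obtain ⟨y, z, hyz, hy, hz⟩ := hc.exists_ne_of_mem_support hmem
  rcases adj_inner_left_or_right (c.adj_of_mem_edges hy) with hy' | hy'
  · exact ⟨y, hy, hy'⟩
  rcases adj_inner_left_or_right (c.adj_of_mem_edges hz) with hz' | hz'
  · exact ⟨z, hz, hz'⟩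
  exact absurd (eq_of_right hy' hz') hyz

lemma cut_mem_edges {x : pathVtx p n G} {c : (Gprime p n G).Walk x x} (hc : c.IsCycle)
    {q : farPairs p n G} (t₀ : Fin (2 * p - 1)) (ht₀ : t₀.val = 0) :
    ∀ t : Fin (2 * p - 1), inner q t ∈ c.support →
      s(inner q t₀, pend q.val.1) ∈ c.edges := by
  rintro ⟨t, ht⟩ hmem
  induction t with
  | zero =>
    obtain ⟨y, hy, ⟨-, rfl⟩ | ⟨s, hs, -⟩⟩ := exists_left_mem_edges hc hmem
    · rwa [show t₀ = ⟨0, ht⟩ from Fin.ext ht₀]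
    · simp at hs
  | succ t ih =>
    obtain ⟨y, hy, ⟨h0, -⟩ | ⟨s, hs, rfl⟩⟩ := exists_left_mem_edges hc hmem
    · simp at h0
    · have := c.snd_mem_support_of_mem_edges hy
      rw [show s = ⟨t, by omega⟩ from Fin.ext (by simpa using hs)] at this
      exact ih (by omega) this

lemma four_mul_add_two_le_length_of_inner_mem {x : pathVtx p n G} {c : (Gprime p n G).Walk x x}
    (hc : c.IsCycle) {q : farPairs p n G} {t : Fin (2 * p - 1)} (hmem : inner q t ∈ c.support) :
    4 * p + 2 ≤ c.length := by
  let t₀ : Fin (2 * p - 1) := ⟨0, t.pos⟩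
  have := hc.isTrail.add_one_le_length_of_lipschitz (cut_mem_edges hc t₀ rfl t hmem)
    fun _ _ => potential_le_add_one q t₀ rfl
  simp only [potential, pendPotential, if_true, t₀] at this
  omega

lemma mem_range_orig_of_mem_support {x : pathVtx p n G} {c : (Gprime p n G).Walk x x}
    (hc : c.IsCycle) (h : ∀ q t, inner q t ∉ c.support) :
    ∀ z ∈ c.support, z ∈ Set.range (origEmbedding (p := p) (G := G)) := by
  rintro (i | i | ⟨q, t⟩) hz
  · exact ⟨i, rfl⟩
  · obtain ⟨y, z, hyz, hy, hz⟩ := hc.exists_ne_of_mem_support hz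
    have hy' := c.adj_of_mem_edges hy
    have hz' := c.adj_of_mem_edges hz
    rcases y with j | j | ⟨r, s⟩
    · rcases z with k | k | ⟨r', s'⟩
      · obtain rfl := adj_pend_orig.mp hy'
        obtain rfl := adj_pend_orig.mp hz'
        exact absurd rfl hyz
      · exact absurd hz' not_adj_pend_pend
      · exact absurd (c.snd_mem_support_of_mem_edges hz) (h r' s')
    · exact absurd hy' not_adj_pend_pend
    · exact absurd (c.snd_mem_support_of_mem_edges hy) (h r s)
  · exact absurd hz (h q t)

theorem four_mul_add_two_le_length
    (hG : ∀ a (c : G.Walk a a), c.IsCycle → 4 * p + 2 ≤ c.length)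
    {x : pathVtx p n G} {c : (Gprime p n G).Walk x x} (hc : c.IsCycle) :
    4 * p + 2 ≤ c.length := by
  by_cases h : ∃ q t, inner q t ∈ c.support
  · obtain ⟨q, t, hmem⟩ := h
    exact four_mul_add_two_le_length_of_inner_mem hc hmem
  · push Not at h
    obtain ⟨a, c', hc', hlen⟩ :=
      origEmbedding.exists_isCycle_length_eq hc (mem_range_orig_of_mem_support hc h)
    exact hlen ▸ hG a c' hc'

end Gprime

/-- if `G` has girth at least `max (8p-3) (4p+2)`, then the graph
`G'` (i) has every two vertices joined by a path of length at most `4p`,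
(ii) has girth at least `4p+2`, and (iii) is 3-colourable iff `G` is. -/
theorem stmt_16 (p n : ℕ) (hp : 1 ≤ p) (G : SimpleGraph (Fin n))
    (hgirth : ((max (8 * p - 3) (4 * p + 2) : ℕ) : ℕ∞) ≤ G.girth) :
    (∀ x y : pathVtx p n G,
        ∃ w : (Gprime p n G).Walk x y, w.length ≤ 4 * p) ∧
    (((4 * p + 2 : ℕ) : ℕ∞) ≤ (Gprime p n G).girth) ∧
    ((Gprime p n G).Colorable 3 ↔ G.Colorable 3) := by
  have hG : ∀ a (c : G.Walk a a), c.IsCycle → max (8 * p - 3) (4 * p + 2) ≤ c.length :=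
    fun a c hc => (Nat.cast_le.mp hgirth).trans (girth_le_length hc)
  have hGcyc : ¬ G.IsAcyclic := fun h => by simp [h.girth_eq_zero] at hgirth
  refine ⟨fun x y => exists_walk_length_le_of_edist_le <| Gprime.edist_le_four_mul hp
    (fun a c hc => (le_max_left _ _).trans (hG a c hc)) x y, ?_, Gprime.colorable_three_iff⟩
  obtain ⟨x, c, hc, hlen⟩ :=
    exists_girth_eq_length.mpr fun h => hGcyc (h.embedding Gprime.origEmbedding)
  rw [hlen]
  exact Nat.cast_le.mpr <| Gprime.four_mul_add_two_le_length
    (fun a c hc => (le_max_right _ _).trans (hG a c hc)) hc
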